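/- arXiv:1907.04420 — 5 statements merged into one kernel-verified Lean document; each statement's English description precedes it below -/
import Mathlib

section
/- Let (M, dist) be a metric space, let q = q_1, …, q_k be a curve with k ≥ 1 vertices, and let X and Y be curves in M, with X∘Y denoting the concatenation of X and Y. Writing q_{[a,b]} for the subcurve q_a, …, q_b, one has d_dF(q, X∘Y) = min( min_{1 ≤ i ≤ k} max( d_dF(q_{[1,i]}, X), d_dF(q_{[i,k]}, Y) ), min_{1 ≤ i ≤ k−1} max( d_dF(q_{[1,i]}, X), d_dF(q_{[i+1,k]}, Y) ) ). -/
/-- One step of a traversal: each index advances by `0` or `1`,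
and at least one of the two indices advances. -/
def FrechetStep (a b : ℕ × ℕ) : Prop :=
  (b.1 = a.1 ∨ b.1 = a.1 + 1) ∧ (b.2 = a.2 ∨ b.2 = a.2 + 1) ∧ a.1 + a.2 < b.1 + b.2

/-- `T` is a traversal of two curves with `m` resp. `k` vertices.  Indices are
`0`-based: the vertices of the first curve are indexed `0, …, m-1` and those of
the second curve `0, …, k-1`. -/
def IsTraversal (m k : ℕ) (T : List (ℕ × ℕ)) : Prop :=
  T ≠ [] ∧ T.head? = some (0, 0) ∧ T.getLast? = some (m - 1, k - 1) ∧
    T.Chain' FrechetStep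

/-- The cost of a traversal `T` of the curves `p` and `q`: the maximum of the
pairwise distances of points paired by `T`. -/
noncomputable def travCost {M : Type*} [MetricSpace M] (p q : ℕ → M)
    (T : List (ℕ × ℕ)) : ℝ :=
  (T.map fun ij => dist (p ij.1) (q ij.2)).foldr max 0

/-- The discrete Fréchet distance between the curve with the `m` vertices
`p 0, …, p (m-1)` and the curve with the `k` vertices `q 0, …, q (k-1)`:
the minimum cost of a traversal of the two curves. -/
noncomputable def discreteFrechet {M : Type*} [MetricSpace M]
    (m : ℕ) (p : ℕ → M) (k : ℕ) (q : ℕ → M) : ℝ :=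
  sInf (travCost p q '' {T | IsTraversal m k T})

/-! A traversal of `q` and `X∘Y` is cut just before its first pair whose second index lies in `Y`.
The first part is a traversal of a prefix `q_{[1,i]}` with `X`; the crossing step moves from the
last vertex of `X` to the first vertex of `Y` while the index into `q` stays at `i` or moves to
`i + 1`, so the second part, shifted back, is a traversal of `q_{[i,k]}` or `q_{[i+1,k]}` with `Y`.
Conversely two such traversals glue to one of `q` and `X∘Y`, and in both directions the cost of
the whole is the maximum of the costs of the parts. -/

lemma le_foldr_max {α : Type*} [LinearOrder α] (b : α) : ∀ l : List α, b ≤ l.foldr max b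
  | [] => le_rfl
  | _ :: l => (le_foldr_max b l).trans (le_max_right _ _)

lemma foldr_max_append {α : Type*} [LinearOrder α] (b : α) (l₁ l₂ : List α) :
    (l₁ ++ l₂).foldr max b = max (l₁.foldr max b) (l₂.foldr max b) := by
  induction l₁ with
  | nil => exact (max_eq_right (le_foldr_max b l₂)).symm
  | cons x l ih => simp only [List.cons_append, List.foldr_cons, ih, max_assoc]

lemma le_max_csInf_of_forall_le_max {α : Type*} [ConditionallyCompleteLinearOrder α]
    {A B : Set α} {x : α} (hA : A.Nonempty) (hB : B.Nonempty)
    (h : ∀ a ∈ A, ∀ b ∈ B, x ≤ max a b) : x ≤ max (sInf A) (sInf B) := by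
  by_contra! hlt
  obtain ⟨a, ha, hax⟩ := exists_lt_of_csInf_lt hA ((le_max_left _ _).trans_lt hlt)
  obtain ⟨b, hb, hbx⟩ := exists_lt_of_csInf_lt hB ((le_max_right _ _).trans_lt hlt)
  exact (h a ha b hb).not_gt (max_lt hax hbx)

namespace FrechetStep

variable {x y : ℕ × ℕ}

lemma le (h : FrechetStep x y) : x ≤ y := by
  obtain ⟨h₁, h₂, -⟩ := h
  exact Prod.mk_le_mk.2 ⟨by omega, by omega⟩

lemma add_right_iff (d : ℕ × ℕ) : FrechetStep (x + d) (y + d) ↔ FrechetStep x y := by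
  simp only [FrechetStep, Prod.fst_add, Prod.snd_add]
  omega

lemma tsub_right (h : FrechetStep x y) {d : ℕ × ℕ} (hd : d ≤ x) :
    FrechetStep (x - d) (y - d) := by
  obtain ⟨h₁, h₂, h₃⟩ := h
  obtain ⟨hd₁, hd₂⟩ := Prod.mk_le_mk.1 hd
  simp only [FrechetStep, Prod.fst_sub, Prod.snd_sub]
  omega

end FrechetStep

namespace List.IsChain

variable {l : List (ℕ × ℕ)} {x y : ℕ × ℕ}

lemma pairwise_le (hl : l.IsChain FrechetStep) : l.Pairwise (· ≤ ·) :=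
  (hl.imp fun _ _ h => h.le).pairwise

lemma head_le (hl : l.IsChain FrechetStep) (hx : l.head? = some x) (hy : y ∈ l) : x ≤ y := by
  obtain ⟨t, rfl⟩ := List.head?_eq_some_iff.1 hx
  rcases List.mem_cons.1 hy with rfl | hy
  · exact le_rfl
  · exact List.rel_of_pairwise_cons hl.pairwise_le hy

lemma le_getLast (hl : l.IsChain FrechetStep) (hx : l.getLast? = some x) (hy : y ∈ l) :
    y ≤ x := by
  obtain ⟨t, rfl⟩ := List.getLast?_eq_some_iff.1 hx
  rcases List.mem_append.1 hy with hy | hy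
  · exact (List.pairwise_append.1 hl.pairwise_le).2.2 y hy x (List.mem_singleton_self x)
  · rw [List.mem_singleton.1 hy]

end List.IsChain

lemma isTraversal_singleton : IsTraversal 1 1 [(0, 0)] :=
  ⟨List.cons_ne_nil _ _, rfl, rfl, List.isChain_singleton _⟩

namespace IsTraversal

variable {m k : ℕ} {T : List (ℕ × ℕ)}

lemma isChain (hT : IsTraversal m k T) : T.IsChain FrechetStep := hT.2.2.2

lemma snd_lt (hT : IsTraversal m k T) (hk : 1 ≤ k) {x : ℕ × ℕ} (hx : x ∈ T) : x.2 < k := by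
  have := (Prod.mk_le_mk.1 (hT.isChain.le_getLast hT.2.2.1 hx)).2
  omega

lemma append_map_add {m₁ k₁ m₂ k₂ : ℕ} {T₁ T₂ : List (ℕ × ℕ)} {d : ℕ × ℕ}
    (h₁ : IsTraversal m₁ k₁ T₁) (h₂ : IsTraversal m₂ k₂ T₂) (hd : FrechetStep (m₁ - 1, k₁ - 1) d)
    (hm₂ : 1 ≤ m₂) (hk₂ : 1 ≤ k₂) :
    IsTraversal (d.1 + m₂) (d.2 + k₂) (T₁ ++ T₂.map (· + d)) := by
  obtain ⟨h₁n, h₁h, h₁l, h₁c⟩ := h₁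
  obtain ⟨-, h₂h, h₂l, h₂c⟩ := h₂
  refine ⟨by simp [h₁n], by rw [List.head?_append_of_ne_nil _ h₁n, h₁h], ?_, ?_⟩
  · rw [List.getLast?_append, List.getLast?_map, h₂l]
    simp only [Option.map_some, Option.some_or, Option.some.injEq]
    ext <;> simp only [Prod.fst_add, Prod.snd_add] <;> omega
  · have h₂c' := (List.isChain_map _).2 (h₂c.imp fun _ _ h => (FrechetStep.add_right_iff d).2 h)
    refine h₁c.append h₂c' ?_
    rw [h₁l, List.head?_map, h₂h, Option.map_some, Prod.mk_zero_zero, zero_add]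
    simpa using hd

lemma map_tsub_of_isChain {d : ℕ × ℕ} (hc : T.IsChain FrechetStep) (hh : T.head? = some d)
    (hl : T.getLast? = some ((m - 1, k - 1) + d)) : IsTraversal m k (T.map (· - d)) := by
  have hdT : ∀ x ∈ T, d ≤ x := fun x hx => hc.head_le hh hx
  refine ⟨fun h => by simp [List.map_eq_nil_iff.1 h] at hh, ?_, ?_, ?_⟩
  · simp [List.head?_map, hh, Prod.mk_zero_zero]
  · simp [List.getLast?_map, hl]
  · exact (List.isChain_map _).2 (hc.imp_of_mem_imp fun x _ hx _ h => h.tsub_right (hdT x hx))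

lemma exists_eq_append_isChain {n : ℕ} (hT : IsTraversal m (n + k) T) (hn : 1 ≤ n) (hk : 1 ≤ k) :
    ∃ i c T₁ R, 1 ≤ i ∧ (c + 1 = i ∨ c = i) ∧ IsTraversal i n T₁ ∧ R.IsChain FrechetStep ∧
      R.head? = some (c, n) ∧ R.getLast? = some (m - 1, n + k - 1) ∧ T = T₁ ++ R := by
  obtain ⟨-, hhead, hlast, hchain⟩ := hT
  set p : ℕ × ℕ → Bool := fun x => x.2 < n
  set T₁ := T.takeWhile p
  set R := T.dropWhile p
  have hsplit : T₁ ++ R = T := List.takeWhile_append_dropWhile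
  obtain ⟨h₁c, hRc, hjoin⟩ := List.isChain_append.1 (hsplit ▸ hchain : (T₁ ++ R).IsChain _)
  have h₁n : T₁ ≠ [] := by
    obtain ⟨t, rfl⟩ := List.head?_eq_some_iff.1 hhead
    show List.takeWhile p ((0, 0) :: t) ≠ []
    rw [List.takeWhile_cons_of_pos (by simp only [p, decide_eq_true_eq]; omega)]
    exact List.cons_ne_nil _ _
  have hRn : R ≠ [] := fun h => by
    have := List.dropWhile_eq_nil_iff.1 h _ (List.mem_of_getLast? hlast)
    simp only [p, decide_eq_true_eq] at this
    omega
  set e := T₁.getLast h₁n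
  set d := R.head hRn
  have he : e.2 < n := by simpa [p] using List.mem_takeWhile_imp (List.getLast_mem h₁n)
  have hd : n ≤ d.2 := by simpa [p] using List.head_dropWhile_not p hRn
  obtain ⟨hstep₁, hstep₂, -⟩ : FrechetStep e d :=
    hjoin e (List.getLast?_eq_some_getLast h₁n) d (List.head?_eq_some_head hRn)
  refine ⟨e.1 + 1, d.1, T₁, R, by omega, by omega, ⟨h₁n, ?_, ?_, h₁c⟩, hRc, ?_, ?_, hsplit.symm⟩
  · rwa [← hsplit, List.head?_append_of_ne_nil _ h₁n] at hhead
  · rw [List.getLast?_eq_some_getLast h₁n, Option.some.injEq]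
    show e = (e.1 + 1 - 1, n - 1)
    ext <;> dsimp only <;> omega
  · rw [List.head?_eq_some_head hRn, Option.some.injEq]
    show d = (d.1, n)
    exact Prod.ext rfl (by dsimp only; omega)
  · rw [← hlast, ← hsplit, List.getLast?_append_of_ne_nil _ hRn]

lemma exists_eq_append_map_add {n : ℕ} (hT : IsTraversal m (n + k) T) (hm : 1 ≤ m)
    (hn : 1 ≤ n) (hk : 1 ≤ k) :
    ∃ i c T₁ T₂, 1 ≤ i ∧ (c + 1 = i ∨ c = i) ∧ c < m ∧ IsTraversal i n T₁ ∧
      IsTraversal (m - c) k T₂ ∧ T = T₁ ++ T₂.map (· + (c, n)) := by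
  obtain ⟨i, c, T₁, R, hi, hci, hT₁, hRc, hRhead, hRlast, rfl⟩ :=
    hT.exists_eq_append_isChain hn hk
  have hdR : ∀ x ∈ R, (c, n) ≤ x := fun x hx => hRc.head_le hRhead hx
  have hcm : c ≤ m - 1 := (Prod.mk_le_mk.1 (hdR _ (List.mem_of_getLast? hRlast))).1
  refine ⟨i, c, T₁, R.map (· - (c, n)), hi, hci, by omega, hT₁, ?_, ?_⟩
  · refine map_tsub_of_isChain hRc hRhead (hRlast.trans (congrArg some ?_))
    ext <;> simp only [Prod.fst_add, Prod.snd_add] <;> omega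
  · rw [List.map_map]
    congr
    exact (List.map_congr_left fun x hx => tsub_add_cancel_of_le (hdR x hx)).trans R.map_id |>.symm

end IsTraversal

lemma exists_isTraversal {m k : ℕ} (hm : 1 ≤ m) (hk : 1 ≤ k) : ∃ T, IsTraversal m k T := by
  induction m, hm using Nat.le_induction with
  | base =>
    induction k, hk using Nat.le_induction with
    | base => exact ⟨_, isTraversal_singleton⟩
    | succ k hk ih =>
      obtain ⟨T, hT⟩ := ih
      exact ⟨_, hT.append_map_add (d := (0, k)) isTraversal_singleton
        (by dsimp only [FrechetStep]; omega) le_rfl le_rfl⟩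
  | succ m hm ih =>
    obtain ⟨T, hT⟩ := ih
    exact ⟨_, hT.append_map_add (d := (m, k - 1)) isTraversal_singleton
      (by dsimp only [FrechetStep]; omega) le_rfl (by omega)⟩

section Cost

variable {M : Type*} [MetricSpace M]

lemma travCost_nonneg (p q : ℕ → M) (T : List (ℕ × ℕ)) : 0 ≤ travCost p q T :=
  le_foldr_max 0 _

lemma travCost_append (p q : ℕ → M) (T₁ T₂ : List (ℕ × ℕ)) :
    travCost p q (T₁ ++ T₂) = max (travCost p q T₁) (travCost p q T₂) := by
  rw [travCost, List.map_append, foldr_max_append]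
  rfl

lemma travCost_map_add (p q : ℕ → M) (T : List (ℕ × ℕ)) (d : ℕ × ℕ) :
    travCost p q (T.map (· + d)) = travCost (fun i => p (d.1 + i)) (fun j => q (d.2 + j)) T := by
  simp only [travCost, List.map_map, Function.comp_def, Prod.fst_add, Prod.snd_add, add_comm]

lemma travCost_congr {p q p' q' : ℕ → M} {T : List (ℕ × ℕ)}
    (h : ∀ x ∈ T, dist (p x.1) (q x.2) = dist (p' x.1) (q' x.2)) :
    travCost p q T = travCost p' q' T :=
  congrArg (List.foldr max 0) (List.map_congr_left h)

lemma discreteFrechet_nonneg (m : ℕ) (p : ℕ → M) (k : ℕ) (q : ℕ → M) :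
    0 ≤ discreteFrechet m p k q :=
  Real.sInf_nonneg (Set.forall_mem_image.2 fun T _ => travCost_nonneg p q T)

lemma discreteFrechet_le_travCost {m k : ℕ} (p q : ℕ → M) {T : List (ℕ × ℕ)}
    (hT : IsTraversal m k T) : discreteFrechet m p k q ≤ travCost p q T :=
  csInf_le ⟨0, Set.forall_mem_image.2 fun T _ => travCost_nonneg p q T⟩ ⟨T, hT, rfl⟩

end Cost

section Append

variable {M : Type*} [MetricSpace M]

abbrev curveAppend (a : ℕ) (X Y : ℕ → M) : ℕ → M := fun j => if j < a then X j else Y (j - a)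

variable {a b : ℕ} (q X Y : ℕ → M)

lemma travCost_curveAppend {i c : ℕ} {T₁ : List (ℕ × ℕ)} (hT₁ : IsTraversal i a T₁) (ha : 1 ≤ a)
    (T₂ : List (ℕ × ℕ)) :
    travCost q (curveAppend a X Y) (T₁ ++ T₂.map (· + (c, a))) =
      max (travCost q X T₁) (travCost (fun j => q (c + j)) Y T₂) := by
  rw [travCost_append, travCost_map_add]
  congr 1
  · exact travCost_congr fun x hx => by simp [curveAppend, hT₁.snd_lt ha hx]
  · simp [curveAppend]

lemma discreteFrechet_curveAppend_le {k i c : ℕ} (hi : 1 ≤ i) (hci : c + 1 = i ∨ c = i)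
    (hck : c < k) (ha : 1 ≤ a) (hb : 1 ≤ b) :
    discreteFrechet k q (a + b) (curveAppend a X Y) ≤
      max (discreteFrechet i q a X) (discreteFrechet (k - c) (fun j => q (c + j)) b Y) := by
  refine le_max_csInf_of_forall_le_max (.image _ (exists_isTraversal hi ha))
    (.image _ (exists_isTraversal (by omega) hb)) ?_
  rintro _ ⟨T₁, hT₁, rfl⟩ _ ⟨T₂, hT₂, rfl⟩
  have hT := hT₁.append_map_add hT₂ (d := (c, a)) (by dsimp only [FrechetStep]; omega)
    (by omega) hb
  rw [show (c, a).1 + (k - c) = k by omega] at hT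
  rw [← travCost_curveAppend q X Y hT₁ ha]
  exact discreteFrechet_le_travCost _ _ hT

lemma exists_max_discreteFrechet_le_travCost {k : ℕ} {T : List (ℕ × ℕ)}
    (hT : IsTraversal k (a + b) T) (hk : 1 ≤ k) (ha : 1 ≤ a) (hb : 1 ≤ b) :
    ∃ i c, 1 ≤ i ∧ (c + 1 = i ∨ c = i) ∧ c < k ∧
      max (discreteFrechet i q a X) (discreteFrechet (k - c) (fun j => q (c + j)) b Y) ≤
        travCost q (curveAppend a X Y) T := by
  obtain ⟨i, c, T₁, T₂, hi, hci, hck, hT₁, hT₂, rfl⟩ := hT.exists_eq_append_map_add hk ha hb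
  refine ⟨i, c, hi, hci, hck, ?_⟩
  rw [travCost_curveAppend q X Y hT₁ ha]
  exact max_le_max (discreteFrechet_le_travCost q X hT₁) (discreteFrechet_le_travCost _ Y hT₂)

end Append

/-- **composition / splitting along a concatenation.**
For a query curve `q` with `k ≥ 1` vertices and curves `X` (with `a` vertices)
and `Y` (with `b` vertices),
`d_dF(q, X∘Y)` equals the minimum, over all `1 ≤ i ≤ k`, of
`max(d_dF(q_{[1,i]}, X), d_dF(q_{[i,k]}, Y))`, and over all `1 ≤ i ≤ k − 1`, of
`max(d_dF(q_{[1,i]}, X), d_dF(q_{[i+1,k]}, Y))`.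
Here (with `1`-based index `i` as in the paper, applied to the `0`-based
vertex functions): `q_{[1,i]}` is `q` with complexity `i`, `q_{[i,k]}` is
`fun j => q (i - 1 + j)` with complexity `k - i + 1`, and `q_{[i+1,k]}` is
`fun j => q (i + j)` with complexity `k - i`; the concatenation `X∘Y` is
`fun j => if j < a then X j else Y (j - a)` with complexity `a + b`. -/
theorem discreteFrechet_concat {M : Type*} [MetricSpace M]
    (k a b : ℕ) (hk : 1 ≤ k) (ha : 1 ≤ a) (hb : 1 ≤ b)
    (q X Y : ℕ → M) :
    discreteFrechet k q (a + b) (fun j => if j < a then X j else Y (j - a)) =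
      sInf ({ c | ∃ i, 1 ≤ i ∧ i ≤ k ∧
                c = max (discreteFrechet i q a X)
                    (discreteFrechet (k - i + 1) (fun j => q (i - 1 + j)) b Y) } ∪
            { c | ∃ i, 1 ≤ i ∧ i ≤ k - 1 ∧
                c = max (discreteFrechet i q a X)
                    (discreteFrechet (k - i) (fun j => q (i + j)) b Y) }) := by
  apply le_antisymm
  · refine le_csInf ⟨_, Or.inl ⟨1, le_rfl, hk, rfl⟩⟩ ?_
    rintro _ (⟨i, hi, hik, rfl⟩ | ⟨i, hi, hik, rfl⟩)
    · rw [show k - i + 1 = k - (i - 1) by omega]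
      exact discreteFrechet_curveAppend_le q X Y hi (Or.inl (by omega)) (by omega) ha hb
    · exact discreteFrechet_curveAppend_le q X Y hi (Or.inr rfl) (by omega) ha hb
  · refine le_csInf (.image _ (exists_isTraversal hk (by omega))) ?_
    rintro _ ⟨T, hT, rfl⟩
    obtain ⟨i, c, hi, hci, hck, hle⟩ := exists_max_discreteFrechet_le_travCost q X Y hT hk ha hb
    refine csInf_le_of_le ⟨0, ?_⟩ ?_ hle
    · rintro _ (⟨i, -, -, rfl⟩ | ⟨i, -, -, rfl⟩) <;>
        exact le_max_of_le_left (discreteFrechet_nonneg _ _ _ _)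
    · rcases hci with rfl | rfl
      · refine Or.inl ⟨c + 1, hi, by omega, ?_⟩
        rw [Nat.add_sub_cancel, show k - (c + 1) + 1 = k - c by omega]
      · exact Or.inr ⟨c, hi, by omega, rfl⟩
end

section
/- Let d ≥ 1, let δ > 0, and let X be a finite subset of ℝ^d with diameter at most Δ (i.e., ‖x − y‖ ≤ Δ for all x, y ∈ X). If z is drawn uniformly at random from the interval [0, δ], then Pr[ ∃ x ∈ X, ∃ y ∈ X : g_{δ,z}(x) ≠ g_{δ,z}(y) ] ≤ dΔ/δ. -/
open MeasureTheory

/-- The randomly shifted grid function `g_{δ,z} : ℝ^d → ℤ^d`,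
`g_{δ,z}(x) = (⌊(x₁ − z)/δ⌋, …, ⌊(x_d − z)/δ⌋)`. -/
noncomputable def shiftedGrid (d : ℕ) (δ z : ℝ) (x : EuclideanSpace ℝ (Fin d)) :
    Fin d → ℤ :=
  fun i => ⌊(x i - z) / δ⌋

lemma shiftedGrid_key (δ a b : ℝ) (hδ : 0 < δ) (hab : a ≤ b) (h : b - a < δ) :
    volume {z ∈ Set.Icc (0:ℝ) δ | ⌊(a - z)/δ⌋ ≠ ⌊(b - z)/δ⌋} ≤ ENNReal.ofReal (b - a) := by
  set k0 : ℤ := ⌊a / δ⌋ with hk0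
  set a0 : ℝ := a - k0 * δ with ha0
  set b0 : ℝ := b - k0 * δ with hb0
  have hfl : (k0:ℝ) ≤ a / δ := Int.floor_le _
  have hfu : a / δ < k0 + 1 := Int.lt_floor_add_one _
  have hk0a : (k0:ℝ) * δ ≤ a := by
    rw [← le_div_iff₀ hδ]; exact hfl
  have hk0b : a < ((k0:ℝ) + 1) * δ := by
    rw [← div_lt_iff₀ hδ]; exact hfu
  have ha0nn : 0 ≤ a0 := by simp [ha0]; linarith
  have ha0lt : a0 < δ := by simp [ha0]; nlinarith
  have hsub : {z ∈ Set.Icc (0:ℝ) δ | ⌊(a - z)/δ⌋ ≠ ⌊(b - z)/δ⌋} ⊆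
      Set.Ioc a0 (min b0 δ) ∪ Set.Icc 0 (b0 - δ) := by
    rintro z ⟨⟨hz0, hzδ⟩, hne⟩
    have hmono : ⌊(a - z)/δ⌋ ≤ ⌊(b - z)/δ⌋ :=
      Int.floor_le_floor ((div_le_div_iff_of_pos_right hδ).mpr (by linarith))
    have hlt : ⌊(a - z)/δ⌋ < ⌊(b - z)/δ⌋ := lt_of_le_of_ne hmono hne
    set k : ℤ := ⌊(a - z)/δ⌋ + 1 with hk
    have hk1 : a - z < (k:ℝ) * δ := by
      have h1 := Int.lt_floor_add_one ((a - z)/δ)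
      have : (a - z) / δ < (k:ℝ) := by push_cast [hk]; push_cast at h1; linarith
      nlinarith [(div_lt_iff₀ hδ).mp this]
    have hk2 : (k:ℝ) * δ ≤ b - z := by
      have h1 : (k:ℝ) ≤ ⌊(b - z)/δ⌋ := by exact_mod_cast hlt
      have h2 : ((⌊(b - z)/δ⌋ : ℝ)) ≤ (b - z)/δ := Int.floor_le _
      nlinarith [(le_div_iff₀ hδ).mp (h1.trans h2)]
    have hklb : k0 ≤ k := by
      have : ((k0:ℝ) - 1) * δ < (k:ℝ) * δ := by nlinarith
      have : (k0:ℝ) - 1 < (k:ℝ) := by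
        exact lt_of_mul_lt_mul_right (by linarith) hδ.le
      have : k0 - 1 < k := by exact_mod_cast this
      omega
    have hkub : k ≤ k0 + 1 := by
      have : (k:ℝ) * δ < ((k0:ℝ) + 2) * δ := by nlinarith
      have : (k:ℝ) < (k0:ℝ) + 2 := lt_of_mul_lt_mul_right (by linarith) hδ.le
      have : k < k0 + 2 := by exact_mod_cast this
      omega
    have hcases : k = k0 ∨ k = k0 + 1 := by omega
    rcases hcases with rfl' | rfl'
    · left
      constructor
      · rw [ha0]; rw [rfl'] at hk1; push_cast at hk1 ⊢; linarith
      · refine le_min ?_ hzδ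
        rw [hb0]; rw [rfl'] at hk2; linarith
    · right
      refine ⟨hz0, ?_⟩
      rw [hb0]; rw [rfl'] at hk2; push_cast at hk2; linarith
  calc volume {z ∈ Set.Icc (0:ℝ) δ | ⌊(a - z)/δ⌋ ≠ ⌊(b - z)/δ⌋}
      ≤ volume (Set.Ioc a0 (min b0 δ) ∪ Set.Icc 0 (b0 - δ)) := measure_mono hsub
    _ ≤ volume (Set.Ioc a0 (min b0 δ)) + volume (Set.Icc 0 (b0 - δ)) := measure_union_le _ _
    _ = ENNReal.ofReal (min b0 δ - a0) + ENNReal.ofReal (b0 - δ - 0) := by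
        rw [Real.volume_Ioc, Real.volume_Icc]
    _ ≤ ENNReal.ofReal (b - a) := by
        have hba : b - a = b0 - a0 := by rw [ha0, hb0]; ring
        rcases le_or_gt b0 δ with h1 | h1
        · rw [min_eq_left h1]
          have : ENNReal.ofReal (b0 - δ - 0) = 0 := by
            rw [ENNReal.ofReal_eq_zero]; linarith
          rw [this, add_zero, hba]
        · rw [min_eq_right h1.le, ← ENNReal.ofReal_add (by linarith) (by linarith), hba]
          apply ENNReal.ofReal_le_ofReal; linarith

/-- **Lemma 6 of the paper.** Let `X ⊆ ℝ^d` be a finite set of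
diameter at most `Δ`.  If `z` is drawn uniformly at random from `[0, δ]`, then
the probability that two points of `X` are mapped to different grid cells by
`g_{δ,z}` is at most `dΔ/δ`. -/
theorem prob_shiftedGrid_splits (d : ℕ) (hd : 1 ≤ d) (δ Δ : ℝ) (hδ : 0 < δ)
    (X : Finset (EuclideanSpace ℝ (Fin d)))
    (hX : ∀ x ∈ X, ∀ y ∈ X, dist x y ≤ Δ) :
    (volume (Set.Icc (0 : ℝ) δ))⁻¹ *
        volume {z ∈ Set.Icc (0 : ℝ) δ |
          ∃ x ∈ X, ∃ y ∈ X, shiftedGrid d δ z x ≠ shiftedGrid d δ z y} ≤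
      ENNReal.ofReal (d * Δ / δ) := by
  rcases le_or_gt δ Δ with hΔ | hΔ
  · -- trivial case: probability ≤ 1 ≤ dΔ/δ
    have h1 : volume {z ∈ Set.Icc (0 : ℝ) δ |
          ∃ x ∈ X, ∃ y ∈ X, shiftedGrid d δ z x ≠ shiftedGrid d δ z y} ≤
        volume (Set.Icc (0 : ℝ) δ) := measure_mono (Set.sep_subset _ _)
    have hne0 : volume (Set.Icc (0 : ℝ) δ) ≠ 0 := by
      rw [Real.volume_Icc]; simp [ENNReal.ofReal_eq_zero]; linarith
    have hnetop : volume (Set.Icc (0 : ℝ) δ) ≠ ⊤ := by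
      rw [Real.volume_Icc]; exact ENNReal.ofReal_ne_top
    calc (volume (Set.Icc (0 : ℝ) δ))⁻¹ *
        volume {z ∈ Set.Icc (0 : ℝ) δ |
          ∃ x ∈ X, ∃ y ∈ X, shiftedGrid d δ z x ≠ shiftedGrid d δ z y}
        ≤ (volume (Set.Icc (0 : ℝ) δ))⁻¹ * volume (Set.Icc (0 : ℝ) δ) :=
          mul_le_mul_right h1 _
      _ = 1 := ENNReal.inv_mul_cancel hne0 hnetop
      _ ≤ ENNReal.ofReal (d * Δ / δ) := by
          rw [show (1:ENNReal) = ENNReal.ofReal 1 by simp]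
          apply ENNReal.ofReal_le_ofReal
          rw [le_div_iff₀ hδ]
          have hd' : (1:ℝ) ≤ d := by exact_mod_cast hd
          nlinarith
  · rcases X.eq_empty_or_nonempty with rfl | hne
    · have hempty : {z ∈ Set.Icc (0 : ℝ) δ |
          ∃ x ∈ (∅ : Finset (EuclideanSpace ℝ (Fin d))), ∃ y ∈ (∅ : Finset (EuclideanSpace ℝ (Fin d))),
            shiftedGrid d δ z x ≠ shiftedGrid d δ z y} = ∅ := by
        ext z; simp
      rw [hempty]; simp
    · have hΔ0 : 0 ≤ Δ := by
        obtain ⟨x, hx⟩ := hne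
        have := hX x hx x hx
        simpa using this
      have himg : ∀ i : Fin d, (X.image (fun x => x i)).Nonempty :=
        fun i => hne.image _
      set m : Fin d → ℝ := fun i => (X.image (fun x => x i)).min' (himg i) with hm
      set M : Fin d → ℝ := fun i => (X.image (fun x => x i)).max' (himg i) with hM
      have hml : ∀ i, ∀ x ∈ X, m i ≤ x i := fun i x hx =>
        Finset.min'_le _ _ (Finset.mem_image_of_mem (fun x => x i) hx)
      have hMu : ∀ i, ∀ x ∈ X, x i ≤ M i := fun i x hx =>
        Finset.le_max' _ _ (Finset.mem_image_of_mem (fun x => x i) hx)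
      have hcoord : ∀ (x y : EuclideanSpace ℝ (Fin d)) (i : Fin d), |x i - y i| ≤ dist x y := by
        intro x y i
        rw [EuclideanSpace.dist_eq, ← Real.sqrt_sq_eq_abs]
        apply Real.sqrt_le_sqrt
        have : |x i - y i| ^ 2 = dist (x i) (y i) ^ 2 := by rw [Real.dist_eq]
        calc (x i - y i) ^ 2 = dist (x i) (y i) ^ 2 := by rw [Real.dist_eq, sq_abs]
          _ ≤ ∑ j, dist (x j) (y j) ^ 2 :=
            Finset.single_le_sum (f := fun j => dist (x j) (y j) ^ 2)
              (fun j _ => sq_nonneg _) (Finset.mem_univ i)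
      have hdiff : ∀ i, M i - m i ≤ Δ := by
        intro i
        obtain ⟨y, hy, hyv⟩ := Finset.mem_image.mp (Finset.max'_mem _ (himg i))
        obtain ⟨x, hx, hxv⟩ := Finset.mem_image.mp (Finset.min'_mem _ (himg i))
        have h1 : |y i - x i| ≤ dist y x := hcoord y x i
        have h2 : dist y x ≤ Δ := hX y hy x hx
        have : M i - m i = y i - x i := by simp only [hM, hm]; rw [← hyv, ← hxv]
        rw [this]
        calc y i - x i ≤ |y i - x i| := le_abs_self _
          _ ≤ Δ := h1.trans h2
      have hmM : ∀ i, m i ≤ M i := by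
        intro i
        obtain ⟨x, hx⟩ := hne
        exact (hml i x hx).trans (hMu i x hx)
      have hsub : {z ∈ Set.Icc (0 : ℝ) δ |
          ∃ x ∈ X, ∃ y ∈ X, shiftedGrid d δ z x ≠ shiftedGrid d δ z y} ⊆
          ⋃ i : Fin d, {z ∈ Set.Icc (0:ℝ) δ | ⌊(m i - z)/δ⌋ ≠ ⌊(M i - z)/δ⌋} := by
        rintro z ⟨hz, x, hx, y, hy, hne'⟩
        obtain ⟨i, hi⟩ := Function.ne_iff.mp hne'
        refine Set.mem_iUnion.mpr ⟨i, hz, ?_⟩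
        intro heq
        apply hi
        simp only [shiftedGrid] at *
        have h1 : ⌊(m i - z)/δ⌋ ≤ ⌊(x i - z)/δ⌋ :=
          Int.floor_le_floor ((div_le_div_iff_of_pos_right hδ).mpr (by linarith [hml i x hx]))
        have h2 : ⌊(x i - z)/δ⌋ ≤ ⌊(M i - z)/δ⌋ :=
          Int.floor_le_floor ((div_le_div_iff_of_pos_right hδ).mpr (by linarith [hMu i x hx]))
        have h3 : ⌊(m i - z)/δ⌋ ≤ ⌊(y i - z)/δ⌋ :=
          Int.floor_le_floor ((div_le_div_iff_of_pos_right hδ).mpr (by linarith [hml i y hy]))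
        have h4 : ⌊(y i - z)/δ⌋ ≤ ⌊(M i - z)/δ⌋ :=
          Int.floor_le_floor ((div_le_div_iff_of_pos_right hδ).mpr (by linarith [hMu i y hy]))
        omega
      have hbound : volume {z ∈ Set.Icc (0 : ℝ) δ |
          ∃ x ∈ X, ∃ y ∈ X, shiftedGrid d δ z x ≠ shiftedGrid d δ z y} ≤
          ENNReal.ofReal (d * Δ) := by
        calc volume {z ∈ Set.Icc (0 : ℝ) δ |
            ∃ x ∈ X, ∃ y ∈ X, shiftedGrid d δ z x ≠ shiftedGrid d δ z y}
            ≤ volume (⋃ i : Fin d, {z ∈ Set.Icc (0:ℝ) δ | ⌊(m i - z)/δ⌋ ≠ ⌊(M i - z)/δ⌋}) :=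
              measure_mono hsub
          _ ≤ ∑ i : Fin d, volume {z ∈ Set.Icc (0:ℝ) δ | ⌊(m i - z)/δ⌋ ≠ ⌊(M i - z)/δ⌋} :=
              measure_iUnion_fintype_le _ _
          _ ≤ ∑ _i : Fin d, ENNReal.ofReal Δ := by
              apply Finset.sum_le_sum
              intro i _
              calc volume {z ∈ Set.Icc (0:ℝ) δ | ⌊(m i - z)/δ⌋ ≠ ⌊(M i - z)/δ⌋}
                  ≤ ENNReal.ofReal (M i - m i) :=
                    shiftedGrid_key δ (m i) (M i) hδ (hmM i) (lt_of_le_of_lt (hdiff i) hΔ)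
                _ ≤ ENNReal.ofReal Δ := ENNReal.ofReal_le_ofReal (by linarith [hdiff i])
          _ = ENNReal.ofReal (d * Δ) := by
              rw [Finset.sum_const, Finset.card_univ, Fintype.card_fin,
                ENNReal.ofReal_mul (by positivity), ENNReal.ofReal_natCast, nsmul_eq_mul]
      rw [Real.volume_Icc, sub_zero]
      have hrw : ENNReal.ofReal (↑d * Δ / δ) = (ENNReal.ofReal δ)⁻¹ * ENNReal.ofReal (↑d * Δ) := by
        rw [ENNReal.ofReal_div_of_pos hδ, div_eq_mul_inv, mul_comm]
      rw [hrw]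
      exact mul_le_mul_right hbound _
end

section
/- Let d ≥ 1, let δ > 0, and let X_1, …, X_k be finite subsets of ℝ^d such that for every i ∈ {1, …, k} the diameter of X_i is at most Δ. If z is drawn uniformly at random from the interval [0, δ], then Pr[ ∃ i ∈ {1, …, k}, ∃ x ∈ X_i, ∃ y ∈ X_i : g_{δ,z}(x) ≠ g_{δ,z}(y) ] ≤ dkΔ/δ. -/
open MeasureTheory

/-!
A finite set splits under `g_{δ,z}` exactly when one of its coordinate projections does, and a
finite set of reals with extremes `a ≤ b` splits exactly when the shifted grid `z + δℤ` meets
`(a, b]`. The number of grid points in `(a, b]` is `⌊(b - z)/δ⌋ - ⌊(a - z)/δ⌋`, whose average over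
`z ∈ [0, δ]` is `(b - a)/δ ≤ Δ/δ`. Markov's inequality and a union bound over the `d` coordinates
and the `k` sets give `dkΔ/δ`.
-/

lemma monotone_floor_div {δ : ℝ} (hδ : 0 < δ) : Monotone fun t : ℝ => (⌊t / δ⌋ : ℝ) :=
  fun _ _ h => Int.cast_mono (Int.floor_mono (div_le_div_of_nonneg_right h hδ.le))

lemma integral_floor_div_sub_integral_floor_div {δ : ℝ} (hδ : 0 < δ) (a b : ℝ) :
    (∫ t in (b - δ)..b, (⌊t / δ⌋ : ℝ)) - ∫ t in (a - δ)..a, (⌊t / δ⌋ : ℝ) = b - a := by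
  -- only the linear part `t / δ` sees the shift of the window: the rest is `δ`-periodic
  have hper : Function.Periodic (fun t : ℝ => t / δ - ⌊t / δ⌋) δ := fun t => by
    simp only [add_div, div_self hδ.ne', Int.floor_add_one]
    push_cast
    ring
  have integral_window : ∀ c, ∫ t in (c - δ)..c, (⌊t / δ⌋ : ℝ)
      = (c ^ 2 - (c - δ) ^ 2) / 2 / δ - ∫ t in (0 : ℝ)..δ, (t / δ - ⌊t / δ⌋) := by
    intro c
    have := hper.intervalIntegral_add_eq (c - δ) 0
    rw [sub_add_cancel, zero_add] at this
    rw [← this, intervalIntegral.integral_sub, intervalIntegral.integral_div, integral_id]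
    · ring
    · exact (continuous_id.div_const δ).intervalIntegrable _ _
    · exact (monotone_floor_div hδ).intervalIntegrable
  rw [integral_window, integral_window]
  field_simp
  ring

lemma intervalIntegrable_floor_sub_div {δ : ℝ} (hδ : 0 < δ) (c u v : ℝ) :
    IntervalIntegrable (fun z : ℝ => (⌊(c - z) / δ⌋ : ℝ)) volume u v := by
  simpa using ((monotone_floor_div hδ).intervalIntegrable (a := c - u) (b := c - v)).comp_sub_left c

lemma integral_floor_sub_div_sub_floor_sub_div {δ : ℝ} (hδ : 0 < δ) (a b : ℝ) :
    ∫ z in (0 : ℝ)..δ, ((⌊(b - z) / δ⌋ : ℝ) - ⌊(a - z) / δ⌋) = b - a := by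
  rw [intervalIntegral.integral_sub (intervalIntegrable_floor_sub_div hδ b 0 δ)
    (intervalIntegrable_floor_sub_div hδ a 0 δ),
    intervalIntegral.integral_comp_sub_left (fun t => (⌊t / δ⌋ : ℝ)),
    intervalIntegral.integral_comp_sub_left (fun t => (⌊t / δ⌋ : ℝ)), sub_zero, sub_zero]
  exact integral_floor_div_sub_integral_floor_div hδ a b

lemma volume_floor_sub_div_ne_le {δ : ℝ} (hδ : 0 < δ) {a b : ℝ} (hab : a ≤ b) :
    volume {z ∈ Set.Icc 0 δ | ⌊(a - z) / δ⌋ ≠ ⌊(b - z) / δ⌋} ≤ ENNReal.ofReal (b - a) := by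
  set S := {z ∈ Set.Icc 0 δ | ⌊(a - z) / δ⌋ ≠ ⌊(b - z) / δ⌋}
  set N : ℝ → ℝ := fun z => (⌊(b - z) / δ⌋ : ℝ) - ⌊(a - z) / δ⌋
  have floor_le : ∀ z, ⌊(a - z) / δ⌋ ≤ ⌊(b - z) / δ⌋ := fun z => by gcongr
  have hN_nonneg : ∀ z, 0 ≤ N z := fun z => sub_nonneg.2 (Int.cast_le.2 (floor_le z))
  have hN_one : ∀ z ∈ S, 1 ≤ ENNReal.ofReal (N z) := fun z hz => by
    have : ⌊(a - z) / δ⌋ + 1 ≤ ⌊(b - z) / δ⌋ := (floor_le z).lt_of_ne hz.2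
    simp only [N, ENNReal.one_le_ofReal, le_sub_iff_add_le']
    exact_mod_cast this
  have hN_integrable : IntegrableOn N (Set.Icc 0 δ) := by
    rw [integrableOn_Icc_iff_integrableOn_Ioc]
    exact ((intervalIntegrable_floor_sub_div hδ b 0 δ).sub
      (intervalIntegrable_floor_sub_div hδ a 0 δ)).1
  calc volume S = ∫⁻ _ in S, 1 := (setLIntegral_one S).symm
    _ ≤ ∫⁻ z in S, ENNReal.ofReal (N z) := setLIntegral_mono (by fun_prop) hN_one
    _ ≤ ∫⁻ z in Set.Icc 0 δ, ENNReal.ofReal (N z) := lintegral_mono_set fun _ hz => hz.1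
    _ = ENNReal.ofReal (∫ z in Set.Icc 0 δ, N z) :=
        (ofReal_integral_eq_lintegral_ofReal hN_integrable (.of_forall hN_nonneg)).symm
    _ = ENNReal.ofReal (b - a) := by
        rw [integral_Icc_eq_integral_Ioc, ← intervalIntegral.integral_of_le hδ.le,
          integral_floor_sub_div_sub_floor_sub_div hδ]

lemma volume_exists_floor_sub_div_ne_le {δ Δ : ℝ} (hδ : 0 < δ) (s : Finset ℝ)
    (hs : ∀ x ∈ s, ∀ y ∈ s, y - x ≤ Δ) :
    volume {z ∈ Set.Icc 0 δ | ∃ x ∈ s, ∃ y ∈ s, ⌊(x - z) / δ⌋ ≠ ⌊(y - z) / δ⌋}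
      ≤ ENNReal.ofReal Δ := by
  rcases s.eq_empty_or_nonempty with rfl | hne
  · simp
  have split_extremes : {z ∈ Set.Icc 0 δ | ∃ x ∈ s, ∃ y ∈ s, ⌊(x - z) / δ⌋ ≠ ⌊(y - z) / δ⌋}
      ⊆ {z ∈ Set.Icc 0 δ | ⌊(s.min' hne - z) / δ⌋ ≠ ⌊(s.max' hne - z) / δ⌋} := by
    rintro z ⟨hz, x, hx, y, hy, hxy⟩
    refine ⟨hz, fun h => hxy ?_⟩
    have hx₁ : ⌊(s.min' hne - z) / δ⌋ ≤ ⌊(x - z) / δ⌋ := by gcongr; exact s.min'_le x hx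
    have hx₂ : ⌊(x - z) / δ⌋ ≤ ⌊(s.max' hne - z) / δ⌋ := by gcongr; exact s.le_max' x hx
    have hy₁ : ⌊(s.min' hne - z) / δ⌋ ≤ ⌊(y - z) / δ⌋ := by gcongr; exact s.min'_le y hy
    have hy₂ : ⌊(y - z) / δ⌋ ≤ ⌊(s.max' hne - z) / δ⌋ := by gcongr; exact s.le_max' y hy
    omega
  calc _ ≤ _ := measure_mono split_extremes
    _ ≤ ENNReal.ofReal (s.max' hne - s.min' hne) :=
        volume_floor_sub_div_ne_le hδ (s.min'_le_max' hne)
    _ ≤ ENNReal.ofReal Δ := ENNReal.ofReal_le_ofReal (hs _ (s.min'_mem hne) _ (s.max'_mem hne))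

lemma measure_iUnion_le_card_mul {α ι : Type*} [MeasurableSpace α] [Fintype ι] {μ : Measure α}
    {s : ι → Set α} {c : ENNReal} (h : ∀ i, μ (s i) ≤ c) :
    μ (⋃ i, s i) ≤ Fintype.card ι * c := by
  calc μ (⋃ i, s i) ≤ ∑ i, μ (s i) := measure_iUnion_fintype_le μ s
    _ ≤ ∑ _i : ι, c := Finset.sum_le_sum fun i _ => h i
    _ = Fintype.card ι * c := by rw [Finset.sum_const, Finset.card_univ, nsmul_eq_mul]

lemma volume_shiftedGrid_splits_le (d : ℕ) {δ Δ : ℝ} (hδ : 0 < δ)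
    (X : Finset (EuclideanSpace ℝ (Fin d))) (hX : ∀ x ∈ X, ∀ y ∈ X, dist x y ≤ Δ) :
    volume {z ∈ Set.Icc 0 δ | ∃ x ∈ X, ∃ y ∈ X, shiftedGrid d δ z x ≠ shiftedGrid d δ z y}
      ≤ d * ENNReal.ofReal Δ := by
  have split_coord : {z ∈ Set.Icc 0 δ | ∃ x ∈ X, ∃ y ∈ X, shiftedGrid d δ z x ≠ shiftedGrid d δ z y}
      ⊆ ⋃ j : Fin d, {z ∈ Set.Icc 0 δ | ∃ u ∈ X.image (· j), ∃ v ∈ X.image (· j),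
          ⌊(u - z) / δ⌋ ≠ ⌊(v - z) / δ⌋} := by
    rintro z ⟨hz, x, hx, y, hy, hxy⟩
    obtain ⟨j, hj⟩ := Function.ne_iff.1 hxy
    exact Set.mem_iUnion.2 ⟨j, hz, x j, Finset.mem_image_of_mem _ hx, y j,
      Finset.mem_image_of_mem _ hy, hj⟩
  have coord_bound : ∀ j : Fin d, ∀ u ∈ X.image (· j), ∀ v ∈ X.image (· j), v - u ≤ Δ := by
    simp only [Finset.mem_image]
    rintro j _ ⟨x, hx, rfl⟩ _ ⟨y, hy, rfl⟩
    calc y j - x j ≤ dist (y j) (x j) := (le_abs_self _).trans (Real.dist_eq _ _).ge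
      _ ≤ dist y x := PiLp.dist_apply_le y x j
      _ ≤ Δ := hX y hy x hx
  calc _ ≤ _ := measure_mono split_coord
    _ ≤ Fintype.card (Fin d) * ENNReal.ofReal Δ :=
        measure_iUnion_le_card_mul fun j => volume_exists_floor_sub_div_ne_le hδ _ (coord_bound j)
    _ = d * ENNReal.ofReal Δ := by rw [Fintype.card_fin]

theorem prob_shiftedGrid_splits_many_general (d k : ℕ) (δ Δ : ℝ) (hδ : 0 < δ)
    (X : Fin k → Finset (EuclideanSpace ℝ (Fin d)))
    (hX : ∀ i, ∀ x ∈ X i, ∀ y ∈ X i, dist x y ≤ Δ) :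
    (volume (Set.Icc (0 : ℝ) δ))⁻¹ *
        volume {z ∈ Set.Icc (0 : ℝ) δ |
          ∃ i, ∃ x ∈ X i, ∃ y ∈ X i, shiftedGrid d δ z x ≠ shiftedGrid d δ z y} ≤
      ENNReal.ofReal (d * k * Δ / δ) := by
  have split_sets : {z ∈ Set.Icc (0 : ℝ) δ |
        ∃ i, ∃ x ∈ X i, ∃ y ∈ X i, shiftedGrid d δ z x ≠ shiftedGrid d δ z y}
      ⊆ ⋃ i, {z ∈ Set.Icc 0 δ | ∃ x ∈ X i, ∃ y ∈ X i, shiftedGrid d δ z x ≠ shiftedGrid d δ z y} :=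
    fun z ⟨hz, i, hi⟩ => Set.mem_iUnion.2 ⟨i, hz, hi⟩
  have hvol := (measure_mono split_sets).trans
    (measure_iUnion_le_card_mul fun i => volume_shiftedGrid_splits_le d hδ (X i) (hX i))
  rw [Fintype.card_fin] at hvol
  calc _ ≤ (ENNReal.ofReal δ)⁻¹ * (k * (d * ENNReal.ofReal Δ)) := by
        rw [Real.volume_Icc, sub_zero]; gcongr
    _ = ENNReal.ofReal (d * k * Δ / δ) := by
        rw [← ENNReal.ofReal_inv_of_pos hδ, ← ENNReal.ofReal_natCast k, ← ENNReal.ofReal_natCast d,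
          ← ENNReal.ofReal_mul (by positivity), ← mul_assoc, ← ENNReal.ofReal_mul (by positivity),
          ← ENNReal.ofReal_mul (by positivity)]
        congr 1
        field_simp

/-- **Lemma 7 of the paper.** Let `X₁, …, X_k ⊆ ℝ^d` be finite
sets, each of diameter at most `Δ`.  If `z` is drawn uniformly at random from
`[0, δ]`, then the probability that some `X_i` contains two points mapped to
different grid cells by `g_{δ,z}` is at most `dkΔ/δ`. -/
theorem prob_shiftedGrid_splits_many (d k : ℕ) (hd : 1 ≤ d) (δ Δ : ℝ) (hδ : 0 < δ)
    (X : Fin k → Finset (EuclideanSpace ℝ (Fin d)))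
    (hX : ∀ i, ∀ x ∈ X i, ∀ y ∈ X i, dist x y ≤ Δ) :
    (volume (Set.Icc (0 : ℝ) δ))⁻¹ *
        volume {z ∈ Set.Icc (0 : ℝ) δ |
          ∃ i, ∃ x ∈ X i, ∃ y ∈ X i, shiftedGrid d δ z x ≠ shiftedGrid d δ z y} ≤
      ENNReal.ofReal (d * k * Δ / δ) :=
  prob_shiftedGrid_splits_many_general d k δ Δ hδ X hX
end

section
/- Let d ≥ 1 and k ≥ 1, let X_1, …, X_l (with l ≤ k) be finite subsets of ℝ^d each of diameter at most 2, and set δ = 4dk. If z is drawn uniformly at random from the interval [0, δ], then Pr[ ∃ i ∈ {1, …, l}, ∃ x ∈ X_i, ∃ y ∈ X_i : g_{δ,z}(x) ≠ g_{δ,z}(y) ] ≤ 1/2. -/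
open MeasureTheory ENNReal

lemma key1d (δ m M : ℝ) (hδ : 4 ≤ δ) (hmM : m ≤ M) (hc : M - m ≤ 2) :
    volume {z ∈ Set.Icc (0:ℝ) δ | ⌊(m - z)/δ⌋ ≠ ⌊(M - z)/δ⌋} ≤ ENNReal.ofReal 2 := by
  have hδ0 : (0:ℝ) < δ := by linarith
  set n1 : ℤ := ⌊m/δ⌋ with hn1
  set a : ℝ := m - n1*δ with ha
  have hfl : (n1:ℝ) ≤ m/δ := Int.floor_le _
  have hfl' : m/δ < n1 + 1 := Int.lt_floor_add_one _
  have ha0 : 0 ≤ a := by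
    have := (le_div_iff₀ hδ0).mp hfl
    simp only [ha]; linarith
  have haδ : a < δ := by
    have := (div_lt_iff₀ hδ0).mp hfl'
    simp only [ha]; nlinarith
  have hsub : {z ∈ Set.Icc (0:ℝ) δ | ⌊(m - z)/δ⌋ ≠ ⌊(M - z)/δ⌋} ⊆
      Set.Ioc a (min (a + (M-m)) δ) ∪ Set.Icc 0 (a + (M-m) - δ) := by
    rintro z ⟨⟨hz0, hzδ⟩, hne⟩
    have hmono : ⌊(m - z)/δ⌋ ≤ ⌊(M - z)/δ⌋ := by
      gcongr
    have hlt : ⌊(m - z)/δ⌋ < ⌊(M - z)/δ⌋ := lt_of_le_of_ne hmono hne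
    set n : ℤ := ⌊(M - z)/δ⌋ with hn
    have h1 : (m - z)/δ < n := by
      have h := Int.lt_floor_add_one ((m - z)/δ)
      have : (⌊(m - z)/δ⌋ : ℝ) + 1 ≤ n := by exact_mod_cast hlt
      linarith
    have h2 : (n:ℝ) ≤ (M - z)/δ := Int.floor_le _
    have h1' : m - z < n*δ := by
      have := (div_lt_iff₀ hδ0).mp h1; linarith
    have h2' : (n:ℝ)*δ ≤ M - z := (le_div_iff₀ hδ0).mp h2
    have hn_ge : n1 ≤ n := by
      by_contra hcon
      push_neg at hcon
      have : (n:ℝ) + 1 ≤ n1 := by exact_mod_cast hcon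
      nlinarith
    have hn_le : n ≤ n1 + 1 := by
      by_contra hcon
      push_neg at hcon
      have hcon' : n1 + 2 ≤ n := by omega
      have : (n1:ℝ) + 2 ≤ n := by exact_mod_cast hcon'
      nlinarith
    have hcase : n = n1 ∨ n = n1 + 1 := by omega
    rcases hcase with rfl' | rfl'
    · left
      constructor
      · have : m - z < n1 * δ := by rw [← rfl']; exact h1'
        simp only [ha]; linarith
      · have : (n1:ℝ) * δ ≤ M - z := by rw [← rfl']; exact h2'
        refine le_min ?_ hzδ
        simp only [ha]; linarith
    · right
      constructor
      · exact hz0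
      · have : ((n1:ℝ) + 1) * δ ≤ M - z := by
          have := h2'; rw [rfl'] at this; push_cast at this; linarith
        simp only [ha]; nlinarith
  calc volume {z ∈ Set.Icc (0:ℝ) δ | ⌊(m - z)/δ⌋ ≠ ⌊(M - z)/δ⌋}
      ≤ volume (Set.Ioc a (min (a + (M-m)) δ)) + volume (Set.Icc 0 (a + (M-m) - δ)) :=
        (measure_mono hsub).trans (measure_union_le _ _)
    _ = ENNReal.ofReal (min (a + (M-m)) δ - a) + ENNReal.ofReal (a + (M-m) - δ - 0) := by
        rw [Real.volume_Ioc, Real.volume_Icc]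
    _ ≤ ENNReal.ofReal 2 := by
        rcases le_total (a + (M-m)) δ with h | h
        · rw [min_eq_left h]
          have h2 : a + (M - m) - δ - 0 ≤ 0 := by linarith
          rw [ENNReal.ofReal_eq_zero.mpr h2, add_zero]
          apply ENNReal.ofReal_le_ofReal; linarith
        · rw [min_eq_right h, ← ENNReal.ofReal_add (by linarith) (by linarith)]
          apply ENNReal.ofReal_le_ofReal; linarith


lemma coord_dist {d : ℕ} (j : Fin d) (x y : EuclideanSpace ℝ (Fin d)) :
    |x j - y j| ≤ dist x y := by
  have h : dist (x j) (y j) ≤ dist x y := by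
    rw [EuclideanSpace.dist_eq]
    have h1 : dist (x j) (y j) ^ 2 ≤ ∑ i, dist (x i) (y i) ^ 2 :=
      Finset.single_le_sum (f := fun i => dist (x i) (y i) ^ 2) (fun i _ => sq_nonneg _) (Finset.mem_univ j)
    calc dist (x j) (y j) = Real.sqrt (dist (x j) (y j) ^ 2) :=
          (Real.sqrt_sq dist_nonneg).symm
      _ ≤ Real.sqrt (∑ i, dist (x i) (y i) ^ 2) := Real.sqrt_le_sqrt h1
  simpa [Real.dist_eq] using h

/-- **Lemma 9 of the paper.** Let `X₁, …, X_l ⊆ ℝ^d` (with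
`l ≤ k`) be finite sets, each of diameter at most `2`, and set `δ = 4dk`.
If `z` is drawn uniformly at random from `[0, δ]`, then the probability that
some `X_i` contains two points mapped to different grid cells by `g_{δ,z}` is
at most `1/2`. -/
theorem prob_shiftedGrid_splits_half (d k l : ℕ) (hd : 1 ≤ d) (hk : 1 ≤ k)
    (hl : l ≤ k)
    (X : Fin l → Finset (EuclideanSpace ℝ (Fin d)))
    (hX : ∀ i, ∀ x ∈ X i, ∀ y ∈ X i, dist x y ≤ 2) :
    (volume (Set.Icc (0 : ℝ) (4 * d * k)))⁻¹ *
        volume {z ∈ Set.Icc (0 : ℝ) (4 * d * k) |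
          ∃ i, ∃ x ∈ X i, ∃ y ∈ X i,
            shiftedGrid d (4 * d * k) z x ≠ shiftedGrid d (4 * d * k) z y} ≤
      1 / 2 := by
  set δ : ℝ := 4 * d * k with hδdef
  have hd1 : (1:ℝ) ≤ d := by exact_mod_cast hd
  have hk1 : (1:ℝ) ≤ k := by exact_mod_cast hk
  have hδ4 : (4:ℝ) ≤ δ := by nlinarith
  have hδ0 : (0:ℝ) < δ := by linarith
  set m : Fin l → Fin d → ℝ := fun i j =>
    if h : (X i).Nonempty then (X i).inf' h (fun x => x j) else 0 with hm
  set M : Fin l → Fin d → ℝ := fun i j =>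
    if h : (X i).Nonempty then (X i).sup' h (fun x => x j) else 0 with hM
  have hmM : ∀ i j, m i j ≤ M i j := by
    intro i j
    simp only [hm, hM]
    split
    · rename_i h
      obtain ⟨x, hx⟩ := h
      exact le_trans (Finset.inf'_le (fun v => v j) hx) (Finset.le_sup' (fun v => v j) hx)
    · exact le_refl 0
  have hdiam : ∀ i j, M i j - m i j ≤ 2 := by
    intro i j
    simp only [hm, hM]
    split
    · rename_i h
      obtain ⟨x0, hx0, hx0e⟩ := Finset.exists_mem_eq_sup' h (fun x => x j)
      obtain ⟨x1, hx1, hx1e⟩ := Finset.exists_mem_eq_inf' h (fun x => x j)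
      rw [hx0e, hx1e]
      calc x0 j - x1 j ≤ |x0 j - x1 j| := le_abs_self _
        _ ≤ dist x0 x1 := coord_dist j x0 x1
        _ ≤ 2 := hX i x0 hx0 x1 hx1
    · norm_num
  set S : Fin l → Fin d → Set ℝ := fun i j =>
    {z ∈ Set.Icc (0:ℝ) δ | ⌊(m i j - z)/δ⌋ ≠ ⌊(M i j - z)/δ⌋} with hS
  have hsub : {z ∈ Set.Icc (0 : ℝ) δ |
      ∃ i, ∃ x ∈ X i, ∃ y ∈ X i,
        shiftedGrid d δ z x ≠ shiftedGrid d δ z y} ⊆ ⋃ i, ⋃ j, S i j := by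
    rintro z ⟨hz, i, x, hx, y, hy, hne⟩
    obtain ⟨j, hj⟩ := Function.ne_iff.mp hne
    refine Set.mem_iUnion.mpr ⟨i, Set.mem_iUnion.mpr ⟨j, hz, ?_⟩⟩
    have hXi : (X i).Nonempty := ⟨x, hx⟩
    have hmx : m i j ≤ x j := by
      simp only [hm, dif_pos hXi]; exact Finset.inf'_le (fun v => v j) hx
    have hMx : x j ≤ M i j := by
      simp only [hM, dif_pos hXi]; exact Finset.le_sup' (fun v => v j) hx
    have hmy : m i j ≤ y j := by
      simp only [hm, dif_pos hXi]; exact Finset.inf'_le (fun v => v j) hy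
    have hMy : y j ≤ M i j := by
      simp only [hM, dif_pos hXi]; exact Finset.le_sup' (fun v => v j) hy
    intro heq
    apply hj
    show ⌊(x j - z)/δ⌋ = ⌊(y j - z)/δ⌋
    have l1 : ⌊(m i j - z)/δ⌋ ≤ ⌊(x j - z)/δ⌋ := by gcongr
    have l2 : ⌊(x j - z)/δ⌋ ≤ ⌊(M i j - z)/δ⌋ := by gcongr
    have l3 : ⌊(m i j - z)/δ⌋ ≤ ⌊(y j - z)/δ⌋ := by gcongr
    have l4 : ⌊(y j - z)/δ⌋ ≤ ⌊(M i j - z)/δ⌋ := by gcongr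
    omega
  have hvol : volume {z ∈ Set.Icc (0 : ℝ) δ |
      ∃ i, ∃ x ∈ X i, ∃ y ∈ X i,
        shiftedGrid d δ z x ≠ shiftedGrid d δ z y} ≤ ENNReal.ofReal (2 * k * d) := by
    calc volume {z ∈ Set.Icc (0 : ℝ) δ |
          ∃ i, ∃ x ∈ X i, ∃ y ∈ X i,
            shiftedGrid d δ z x ≠ shiftedGrid d δ z y}
        ≤ volume (⋃ i, ⋃ j, S i j) := measure_mono hsub
      _ ≤ ∑' (i : Fin l), ∑' (j : Fin d), ENNReal.ofReal 2 := by
          refine (measure_iUnion_le _).trans (ENNReal.tsum_le_tsum fun i => ?_)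
          refine (measure_iUnion_le _).trans (ENNReal.tsum_le_tsum fun j => ?_)
          exact key1d δ (m i j) (M i j) hδ4 (hmM i j) (hdiam i j)
      _ = (l : ℝ≥0∞) * ((d : ℝ≥0∞) * ENNReal.ofReal 2) := by
          simp [tsum_fintype, Finset.sum_const, nsmul_eq_mul]
      _ = ENNReal.ofReal (2 * l * d) := by
          rw [← ENNReal.ofReal_natCast l, ← ENNReal.ofReal_natCast d,
            ← ENNReal.ofReal_mul (by positivity), ← ENNReal.ofReal_mul (by positivity)]
          ring_nf
      _ ≤ ENNReal.ofReal (2 * k * d) := by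
          apply ENNReal.ofReal_le_ofReal
          have : (l:ℝ) ≤ k := by exact_mod_cast hl
          nlinarith
  calc (volume (Set.Icc (0 : ℝ) δ))⁻¹ *
        volume {z ∈ Set.Icc (0 : ℝ) δ |
          ∃ i, ∃ x ∈ X i, ∃ y ∈ X i,
            shiftedGrid d δ z x ≠ shiftedGrid d δ z y}
      ≤ (ENNReal.ofReal δ)⁻¹ * ENNReal.ofReal (2 * k * d) := by
        rw [Real.volume_Icc, sub_zero]
        exact mul_le_mul_right hvol _
    _ = ENNReal.ofReal (2 * k * d) / ENNReal.ofReal δ := by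
        rw [ENNReal.div_eq_inv_mul]
    _ = ENNReal.ofReal ((2 * k * d) / δ) := (ENNReal.ofReal_div_of_pos hδ0).symm
    _ = ENNReal.ofReal (1 / 2) := by
        congr 1
        rw [hδdef]
        have hd0 : (d:ℝ) ≠ 0 := by positivity
        have hk0 : (k:ℝ) ≠ 0 := by positivity
        field_simp
        ring
    _ = 1 / 2 := by
        rw [ENNReal.ofReal_div_of_pos (by norm_num), ENNReal.ofReal_one,
          ENNReal.ofReal_ofNat]
end

section
/- Let (M, dist) be a metric space, let X = {x_1, …, x_n} be a finite subset of M, and let Δ > 0. Draw a uniformly random permutation π of {1, …, n} and, independently, R uniformly from the interval [Δ/4, Δ/2]. Define clusters P_1, …, P_n by P_j = (b(x_{π(j)}, R) ∩ X) \ ⋃_{i < j} b(x_{π(i)}, R), where b(y, R) is the closed ball of radius R around y. Then: (i) for every outcome and every j, the diameter of P_j is at most Δ; and (ii) for every q ∈ M and every t with 0 < t ≤ Δ/8 such that b(q, t) ∩ X ≠ ∅, letting j(π, R) = min{ i : dist(q, x_{π(i)}) ≤ R } (which exists since t < Δ/4 ≤ R), one has Pr[ b(q, t) ∩ X is not a subset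 of P_{j(π,R)} ] ≤ (8t/Δ) · ln( |b(q, Δ) ∩ X| ). -/
/-
(i) is the triangle inequality through the centre of the cluster.

(ii) Fix `R`, and let `S` and `C` be the indices whose points lie within `R + t`, resp.
`R - t`, of `q`. If the element of `S` that `π` lists first lies in `C`, its ball is the first
one to reach `q`, it swallows `b(q, t) ∩ X`, and no earlier ball meets `b(q, t) ∩ X`. So the bad
event forces the `π`-first element of `S` into `S \ C`, which by symmetry has probability
`(|S| - |C|)/|S| ≤ ∑_{|C| < k ≤ |S|} 1/k`. The `k`-th term only occurs when the `k`-th smallest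
distance from `q` lies in `(R - t, R + t]`, a set of radii of length at most `2t`, hence of
probability at most `8t/Δ`. As `1 ≤ |C|` and `|S| ≤ |b(q, Δ) ∩ X| = m`, the total is at most
`(8t/Δ)(H_m - 1) ≤ (8t/Δ) ln m`.
-/

open MeasureTheory Finset
open scoped ENNReal

namespace Equiv.Perm

variable {ι : Type*} [LinearOrder ι]

/-- The element of `S` met first along the enumeration `π 0, π 1, …`. -/
noncomputable def firstIn (π : Perm ι) (S : Finset ι) (hS : S.Nonempty) : ι :=
  π ((S.image π.symm).min' (hS.image _))

variable {S : Finset ι} (hS : S.Nonempty)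

lemma firstIn_mem (π : Perm ι) : firstIn π S hS ∈ S := by
  obtain ⟨a, ha, hae⟩ := mem_image.1 ((S.image π.symm).min'_mem (hS.image _))
  rw [firstIn, ← hae, apply_symm_apply]
  exact ha

lemma symm_firstIn_le (π : Perm ι) {a : ι} (ha : a ∈ S) :
    π.symm (firstIn π S hS) ≤ π.symm a := by
  rw [firstIn, symm_apply_apply]
  exact min'_le _ _ (mem_image_of_mem _ ha)

lemma firstIn_eq_of_forall_le {π : Perm ι} {a : ι} (ha : a ∈ S)
    (h : ∀ b ∈ S, π.symm a ≤ π.symm b) : firstIn π S hS = a :=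
  π.symm.injective <| (symm_firstIn_le hS π ha).antisymm (h _ (firstIn_mem hS π))

lemma swap_apply_mem {u v w : ι} (hu : u ∈ S) (hv : v ∈ S) (hw : w ∈ S) : swap u v w ∈ S := by
  rw [swap_apply_def]
  split_ifs <;> assumption

lemma firstIn_swap_mul (π : Perm ι) {u v : ι} (hu : u ∈ S) (hv : v ∈ S) :
    firstIn (swap u v * π) S hS = swap u v (firstIn π S hS) := by
  refine firstIn_eq_of_forall_le hS (swap_apply_mem hu hv (firstIn_mem hS π)) fun b hb => ?_
  simpa [mul_def, symm_trans_apply] using symm_firstIn_le hS π (swap_apply_mem hu hv hb)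

variable [Fintype ι]

lemma card_firstIn_eq_mul_card {u : ι} (hu : u ∈ S) :
    #{π : Perm ι | firstIn π S hS = u} * #S = Fintype.card (Perm ι) := by
  have hfibre : ∀ v ∈ S,
      #{π : Perm ι | firstIn π S hS = v} = #{π : Perm ι | firstIn π S hS = u} :=
    fun v hv => card_bij' (fun π _ => swap u v * π) (fun π _ => swap u v * π)
      (fun π _ => by simp_all [firstIn_swap_mul hS π hu hv])
      (fun π _ => by simp_all [firstIn_swap_mul hS π hu hv])
      (fun π _ => by simp [← mul_assoc]) (fun π _ => by simp [← mul_assoc])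
  rw [Fintype.card, card_eq_sum_card_fiberwise (s := univ) fun π _ => firstIn_mem hS π,
    sum_congr rfl hfibre, sum_const, smul_eq_mul, mul_comm]

lemma card_firstIn_mem_mul_card {D : Finset ι} (hD : D ⊆ S) :
    #{π : Perm ι | firstIn π S hS ∈ D} * #S = #D * Fintype.card (Perm ι) := by
  rw [card_eq_sum_card_fiberwise (s := {π : Perm ι | firstIn π S hS ∈ D}) (t := D)
      fun π hπ => (mem_filter.1 hπ).2, sum_mul,
    ← sum_const_nat fun u hu => card_firstIn_eq_mul_card hS (hD hu)]
  refine sum_congr rfl fun u hu => ?_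
  rw [filter_filter]
  congr 3
  ext π
  exact and_iff_right_of_imp fun h => h ▸ hu

lemma toMeasure_firstIn_mem [MeasurableSpace (Perm ι)] [DiscreteMeasurableSpace (Perm ι)]
    {D : Finset ι} (hD : D ⊆ S) :
    (PMF.uniformOfFintype (Perm ι)).toMeasure {π | firstIn π S hS ∈ D} = #D / #S := by
  rw [PMF.toMeasure_uniformOfFintype_apply _ (.of_discrete), Fintype.card_subtype,
    ENNReal.div_eq_div_iff (by simpa using hS.ne_empty) (by simp) (by simp) (by simp)]
  norm_cast
  simp only [Set.mem_ofPred_eq]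
  rw [mul_comm, card_firstIn_mem_mul_card hS hD, mul_comm]

end Equiv.Perm

lemma sum_Ioc_one_inv_le_log (m : ℕ) :
    ∑ k ∈ Ioc 1 m, (k : ℝ≥0∞)⁻¹ ≤ ENNReal.ofReal (Real.log m) := by
  rcases Nat.eq_zero_or_pos m with rfl | hm
  · simp
  have hreal : ∑ k ∈ Ioc 1 m, (k : ℝ)⁻¹ ≤ Real.log m := by
    have h := harmonic_le_one_add_log m
    rw [harmonic_eq_sum_Icc, ← add_sum_Ioc_eq_sum_Icc hm] at h
    push_cast at h
    linarith
  calc ∑ k ∈ Ioc 1 m, (k : ℝ≥0∞)⁻¹ = ENNReal.ofReal (∑ k ∈ Ioc 1 m, (k : ℝ)⁻¹) := by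
        rw [ENNReal.ofReal_sum_of_nonneg fun k _ => by positivity]
        refine sum_congr rfl fun k hk => ?_
        rw [ENNReal.ofReal_inv_of_pos (by have := (mem_Ioc.1 hk).1; positivity),
          ENNReal.ofReal_natCast]
    _ ≤ _ := ENNReal.ofReal_le_ofReal hreal

lemma div_le_sum_Ioc_inv (c s : ℕ) :
    ((s - c : ℕ) : ℝ≥0∞) / s ≤ ∑ k ∈ Ioc c s, (k : ℝ≥0∞)⁻¹ := by
  calc ((s - c : ℕ) : ℝ≥0∞) / s = ∑ _k ∈ Ioc c s, (s : ℝ≥0∞)⁻¹ := by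
        rw [sum_const, Nat.card_Ioc, nsmul_eq_mul, div_eq_mul_inv]
    _ ≤ _ := sum_le_sum fun k hk => ENNReal.inv_le_inv.2 (by exact_mod_cast (mem_Ioc.1 hk).2)

section Crossing

variable {ι : Type*} [Fintype ι] (d : ι → ℝ) (t : ℝ)

/-- The radii `R` for which the `k`-th smallest value of `d` lies in `(R - t, R + t]`. -/
def crossingRadii (k : ℕ) : Set ℝ :=
  {R | #{i | d i ≤ R - t} < k ∧ k ≤ #{i | d i ≤ R + t}}

lemma monotone_card_filter_le : Monotone fun r : ℝ => #{i | d i ≤ r} :=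
  fun _ _ hrs => card_le_card <| monotone_filter_right _ fun _ _ h => h.trans hrs

lemma measurableSet_crossingRadii (k : ℕ) : MeasurableSet (crossingRadii d t k) :=
  (((monotone_card_filter_le d).measurable.comp (measurable_id.sub_const t))
      (.of_discrete (s := Set.Iio k))).inter
    (((monotone_card_filter_le d).measurable.comp (measurable_id.add_const t))
      (.of_discrete (s := Set.Ici k)))

lemma volume_crossingRadii_le (k : ℕ) :
    volume (crossingRadii d t k) ≤ ENNReal.ofReal (2 * t) := by
  have hwidth : ∀ R ∈ crossingRadii d t k, ∀ R' ∈ crossingRadii d t k, R' - R ≤ 2 * t := by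
    intro R hR R' hR'
    by_contra! hlt
    have hsub : ({i | d i ≤ R + t} : Finset ι) ⊆ ({i | d i ≤ R' - t} : Finset ι) :=
      monotone_filter_right _ fun i _ (h : d i ≤ R + t) => by linarith
    exact (hR.2.trans (card_le_card hsub)).not_gt hR'.1
  refine (Real.volume_le_diam _).trans <| Metric.ediam_le fun R hR R' hR' => ?_
  rw [edist_dist, Real.dist_eq]
  exact ENNReal.ofReal_le_ofReal <| abs_sub_le_iff.2 ⟨hwidth _ hR' _ hR, hwidth _ hR _ hR'⟩

lemma uniformIcc_crossingRadii_le {a b : ℝ} (hab : a < b) (k : ℕ) :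
    ((volume (Set.Icc a b))⁻¹ • volume.restrict (Set.Icc a b)) (crossingRadii d t k) ≤
      ENNReal.ofReal (2 * t / (b - a)) := by
  rw [Measure.smul_apply, smul_eq_mul, Real.volume_Icc,
    ENNReal.ofReal_div_of_pos (sub_pos.2 hab), ENNReal.div_eq_inv_mul]
  gcongr
  exact (Measure.restrict_apply_le _ _).trans (volume_crossingRadii_le d t k)

lemma sum_Ioc_inv_le_sum_indicator_crossingRadii {R : ℝ} {m : ℕ}
    (hC : 1 ≤ #{i | d i ≤ R - t}) (hS : #{i | d i ≤ R + t} ≤ m) :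
    ∑ k ∈ Ioc #{i | d i ≤ R - t} #{i | d i ≤ R + t}, (k : ℝ≥0∞)⁻¹ ≤
      ∑ k ∈ Ioc 1 m, (crossingRadii d t k).indicator (fun _ => (k : ℝ≥0∞)⁻¹) R := by
  calc _ = ∑ k ∈ Ioc #{i | d i ≤ R - t} #{i | d i ≤ R + t},
        (crossingRadii d t k).indicator (fun _ => (k : ℝ≥0∞)⁻¹) R :=
        sum_congr rfl fun k hk =>
          (Set.indicator_of_mem (s := crossingRadii d t k) (mem_Ioc.1 hk) _).symm
    _ ≤ _ := sum_le_sum_of_subset (Ioc_subset_Ioc hC hS)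

lemma lintegral_sum_indicator_crossingRadii_le (ν : Measure ℝ) {ε : ℝ≥0∞}
    (hε : ∀ k, ν (crossingRadii d t k) ≤ ε) (m : ℕ) :
    ∫⁻ R, ∑ k ∈ Ioc 1 m, (crossingRadii d t k).indicator (fun _ => (k : ℝ≥0∞)⁻¹) R ∂ν ≤
      ε * ENNReal.ofReal (Real.log m) := by
  rw [lintegral_finsetSum _ fun k _ =>
    measurable_const.indicator (measurableSet_crossingRadii d t k)]
  simp_rw [lintegral_indicator_const (measurableSet_crossingRadii d t _)]
  calc ∑ k ∈ Ioc 1 m, (k : ℝ≥0∞)⁻¹ * ν (crossingRadii d t k)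
        ≤ ∑ k ∈ Ioc 1 m, (k : ℝ≥0∞)⁻¹ * ε :=
        sum_le_sum fun k _ => by gcongr; exact hε k
    _ = ε * ∑ k ∈ Ioc 1 m, (k : ℝ≥0∞)⁻¹ := by rw [← sum_mul, mul_comm]
    _ ≤ _ := by gcongr; exact sum_Ioc_one_inv_le_log m

end Crossing

section Clusters

variable {M : Type*} [MetricSpace M] {ι : Type*}

lemma closedBall_inter_range_subset_iff {x : ι → M} {q : M} {t : ℝ} {s : Set M} :
    Metric.closedBall q t ∩ Set.range x ⊆ s ↔ ∀ i, dist (x i) q ≤ t → x i ∈ s :=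
  ⟨fun h i hi => h ⟨hi, i, rfl⟩, by rintro h _ ⟨hy, i, rfl⟩; exact h i hy⟩

lemma natCard_closedBall_inter_range [Fintype ι] {x : ι → M} (hx : Function.Injective x)
    (q : M) (r : ℝ) :
    Nat.card ↥(Metric.closedBall q r ∩ Set.range x) = #{i | dist q (x i) ≤ r} := by
  classical
  rw [← Set.image_preimage_eq_inter_range, Nat.card_image_of_injective hx,
    Nat.card_eq_card_toFinset]
  simp [dist_comm]

variable [LinearOrder ι] (x : ι → M)

def cluster (π : Equiv.Perm ι) (R : ℝ) (j : ι) : Set M :=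
  (Metric.closedBall (x (π j)) R ∩ Set.range x) \
    ⋃ i ∈ {i : ι | i < j}, Metric.closedBall (x (π i)) R

def IsFirstHit (π : Equiv.Perm ι) (R : ℝ) (q : M) (j : ι) : Prop :=
  dist q (x (π j)) ≤ R ∧ ∀ i, i < j → ¬ dist q (x (π i)) ≤ R

variable {x}

lemma dist_le_of_mem_cluster {π : Equiv.Perm ι} {R : ℝ} {j : ι} {a b : M}
    (ha : a ∈ cluster x π R j) (hb : b ∈ cluster x π R j) : dist a b ≤ 2 * R := by
  have ha' : dist a (x (π j)) ≤ R := ha.1.1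
  have hb' : dist b (x (π j)) ≤ R := hb.1.1
  linarith [dist_triangle_right a b (x (π j))]

lemma mem_cluster_iff {π : Equiv.Perm ι} {R : ℝ} {j i : ι} :
    x i ∈ cluster x π R j ↔
      dist (x i) (x (π j)) ≤ R ∧ ∀ i' < j, ¬ dist (x i) (x (π i')) ≤ R := by
  simp [cluster]

lemma measurableSet_firstHit_not_subset_cluster [Fintype ι] [MeasurableSpace (Equiv.Perm ι)]
    [DiscreteMeasurableSpace (Equiv.Perm ι)] (q : M) (t : ℝ) :
    MeasurableSet {ω : Equiv.Perm ι × ℝ | ∃ j, IsFirstHit x ω.1 ω.2 q j ∧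
      ¬ Metric.closedBall q t ∩ Set.range x ⊆ cluster x ω.1 ω.2 j} := by
  refine measurableSet_setOfPred.2 <| measurable_from_prod_countable_right fun π => ?_
  simp only [IsFirstHit, closedBall_inter_range_subset_iff, mem_cluster_iff]
  fun_prop

lemma closedBall_inter_range_subset_cluster [Fintype ι] {π : Equiv.Perm ι} {R t : ℝ} {q : M}
    {j : ι} (ht : 0 ≤ t) (hj : IsFirstHit x π R q j)
    (hS : ({i | dist q (x i) ≤ R + t} : Finset ι).Nonempty)
    (hw : dist q (x (π.firstIn _ hS)) ≤ R - t) :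
    Metric.closedBall q t ∩ Set.range x ⊆ cluster x π R j := by
  set w := π.firstIn _ hS
  have hw_le : ∀ {i}, dist q (x (π i)) ≤ R + t → π.symm w ≤ i := fun h =>
    (Equiv.Perm.symm_firstIn_le hS π (by simpa using h)).trans_eq (π.symm_apply_apply _)
  have hwj : π.symm w = j := le_antisymm (hw_le (by linarith [hj.1])) <| not_lt.1 fun hlt =>
    hj.2 _ hlt (by simpa using hw.trans (by linarith))
  rw [closedBall_inter_range_subset_iff]
  intro i hi
  rw [dist_comm] at hi
  refine mem_cluster_iff.2 ⟨?_, fun i' hi' hclose => ?_⟩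
  · rw [← hwj, Equiv.apply_symm_apply]
    linarith [dist_triangle_left (x i) (x w) q]
  · exact (hwj ▸ hw_le (by linarith [dist_triangle q (x i) (x (π i'))])).not_gt hi'

lemma toMeasure_firstHit_not_subset_cluster_le [Fintype ι] [MeasurableSpace (Equiv.Perm ι)]
    [DiscreteMeasurableSpace (Equiv.Perm ι)] {q : M} {t R r : ℝ} (ht : 0 ≤ t) {i₀ : ι}
    (hi₀ : dist q (x i₀) ≤ R - t) (hr : R + t ≤ r) :
    (PMF.uniformOfFintype (Equiv.Perm ι)).toMeasure
        {π | ∃ j, IsFirstHit x π R q j ∧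
          ¬ Metric.closedBall q t ∩ Set.range x ⊆ cluster x π R j} ≤
      ∑ k ∈ Ioc 1 #{i | dist q (x i) ≤ r},
        (crossingRadii (fun i => dist q (x i)) t k).indicator (fun _ => (k : ℝ≥0∞)⁻¹) R := by
  set S : Finset ι := {i | dist q (x i) ≤ R + t}
  have hS : S.Nonempty := ⟨i₀, mem_filter.2 ⟨mem_univ _, by linarith⟩⟩
  have hcard : #(S.filter fun i => ¬ dist q (x i) ≤ R - t) =
      #S - #{i | dist q (x i) ≤ R - t} := by
    rw [filter_not, card_sdiff_of_subset (filter_subset _ _), filter_filter]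
    congr 3
    ext i
    exact and_iff_right_of_imp fun h => h.trans (by linarith)
  calc _ ≤ (PMF.uniformOfFintype (Equiv.Perm ι)).toMeasure
        {π | π.firstIn S hS ∈ S.filter fun i => ¬ dist q (x i) ≤ R - t} :=
        measure_mono <| by
          rintro π ⟨j, hj, hsub⟩
          exact mem_filter.2 ⟨Equiv.Perm.firstIn_mem hS π,
            fun hw => hsub (closedBall_inter_range_subset_cluster ht hj hS hw)⟩
    _ = ((#S - #{i | dist q (x i) ≤ R - t} : ℕ) : ℝ≥0∞) / #S := by
        rw [Equiv.Perm.toMeasure_firstIn_mem hS (filter_subset _ _), hcard]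
    _ ≤ _ := div_le_sum_Ioc_inv _ _
    _ ≤ _ := sum_Ioc_inv_le_sum_indicator_crossingRadii _ _
        (card_pos.2 ⟨i₀, mem_filter.2 ⟨mem_univ _, hi₀⟩⟩)
        (card_le_card (monotone_filter_right _ fun i _ (h : _ ≤ R + t) => h.trans hr))

end Clusters

/-- **Lemma on random partitions.** Let `X = {x 0, …, x (n-1)}`
be a finite subset of a metric space `M` and `Δ > 0`.  Draw a uniformly random
permutation `π` of the indices and, independently, `R` uniformly from
`[Δ/4, Δ/2]`, and define the clusters
`P j = (b(x (π j), R) ∩ X) \ ⋃_{i < j} b(x (π i), R)`.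
Then (i) every cluster has diameter at most `Δ`, and (ii) for every `q ∈ M`
and `0 < t ≤ Δ/8` with `b(q, t) ∩ X ≠ ∅`, letting `j` be the first index with
`dist(q, x (π j)) ≤ R`, the probability that `b(q, t) ∩ X` is not contained in
the cluster `P j` is at most `(8t/Δ) · ln |b(q, Δ) ∩ X|`. -/
theorem random_partition_properties {M : Type*} [MetricSpace M]
    (n : ℕ) (x : Fin n → M) (hx : Function.Injective x) (Δ : ℝ) (hΔ : 0 < Δ) :
    letI : MeasurableSpace (Equiv.Perm (Fin n)) := ⊤
    let P : Equiv.Perm (Fin n) → ℝ → Fin n → Set M := fun π R j =>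
      (Metric.closedBall (x (π j)) R ∩ Set.range x) \
        ⋃ i ∈ {i : Fin n | i < j}, Metric.closedBall (x (π i)) R
    let μ : Measure (Equiv.Perm (Fin n) × ℝ) :=
      (PMF.uniformOfFintype (Equiv.Perm (Fin n))).toMeasure.prod
        ((volume (Set.Icc (Δ / 4) (Δ / 2)))⁻¹ •
          volume.restrict (Set.Icc (Δ / 4) (Δ / 2)))
    (∀ (π : Equiv.Perm (Fin n)), ∀ R ∈ Set.Icc (Δ / 4) (Δ / 2), ∀ j : Fin n,
        ∀ a ∈ P π R j, ∀ b ∈ P π R j, dist a b ≤ Δ) ∧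
    (∀ (q : M) (t : ℝ), 0 < t → t ≤ Δ / 8 →
        (Metric.closedBall q t ∩ Set.range x).Nonempty →
        μ {ω : Equiv.Perm (Fin n) × ℝ |
            ∃ j : Fin n,
              (dist q (x (ω.1 j)) ≤ ω.2 ∧
                ∀ i : Fin n, i < j → ¬ dist q (x (ω.1 i)) ≤ ω.2) ∧
              ¬ Metric.closedBall q t ∩ Set.range x ⊆ P ω.1 ω.2 j} ≤
          ENNReal.ofReal (8 * t / Δ *
            Real.log (Nat.card ↥(Metric.closedBall q Δ ∩ Set.range x)))) := by
  intro P μ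
  refine ⟨fun π R hR j a ha b hb => (dist_le_of_mem_cluster ha hb).trans (by linarith [hR.2]), ?_⟩
  rintro q t ht htΔ ⟨_, hi₀, i₀, rfl⟩
  let : MeasurableSpace (Equiv.Perm (Fin n)) := ⊤
  set ν := (volume (Set.Icc (Δ / 4) (Δ / 2)))⁻¹ • volume.restrict (Set.Icc (Δ / 4) (Δ / 2))
  have hν : ∀ k, ν (crossingRadii (fun i => dist q (x i)) t k) ≤ ENNReal.ofReal (8 * t / Δ) :=
    fun k => (uniformIcc_crossingRadii_le _ _ (by linarith) k).trans_eq <| by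
      congr 1
      field_simp
      ring
  have hae : ∀ᵐ R ∂ν, R ∈ Set.Icc (Δ / 4) (Δ / 2) :=
    Measure.ae_smul_measure (ae_restrict_mem measurableSet_Icc) _
  rw [natCard_closedBall_inter_range hx]
  calc μ _ = ∫⁻ R, (PMF.uniformOfFintype (Equiv.Perm (Fin n))).toMeasure
        {π | ∃ j, IsFirstHit x π R q j ∧ ¬ Metric.closedBall q t ∩ Set.range x ⊆ cluster x π R j}
        ∂ν := Measure.prod_apply_symm (measurableSet_firstHit_not_subset_cluster q t)
    _ ≤ ∫⁻ R, ∑ k ∈ Ioc 1 #{i | dist q (x i) ≤ Δ},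
          (crossingRadii (fun i => dist q (x i)) t k).indicator (fun _ => (k : ℝ≥0∞)⁻¹) R ∂ν :=
        lintegral_mono_ae <| hae.mono fun R hR =>
          toMeasure_firstHit_not_subset_cluster_le (R := R) (r := Δ) ht.le (i₀ := i₀)
            (by rw [dist_comm]; linarith [hR.1, hi₀.out]) (by linarith [hR.2])
    _ ≤ ENNReal.ofReal (8 * t / Δ) * ENNReal.ofReal (Real.log #{i | dist q (x i) ≤ Δ}) :=
        lintegral_sum_indicator_crossingRadii_le _ _ ν hν _
    _ = _ := (ENNReal.ofReal_mul (by positivity)).symm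
end
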